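/- arXiv:gr-qc/0209052 — 2 statements merged into one kernel-verified Lean document; each statement's English description precedes it below -/
import Mathlib

section
/- Let U, V > 0 and let θ, ζ, λ, ν, r : [0,U] × [0,V] → ℝ be continuous, with r(u,v) > 0, λ(u,v) ≤ 0, and ν(u,v) ≤ 0 everywhere. Suppose that for each fixed v the function u ↦ θ(u,v) is differentiable with ∂_u θ(u,v) = −ζ(u,v) λ(u,v) / r(u,v), and for each fixed u the function v ↦ ζ(u,v) is differentiable with ∂_v ζ(u,v) = −θ(u,v) ν(u,v) / r(u,v). If θ(0,v) ≥ 0 for all v ∈ [0,V] and ζ(u,0) ≥ 0 for all u ∈ [0,U], then θ(u,v) ≥ 0 and ζ(u,v) ≥ 0 for all (u,v) ∈ [0,U] × [0,V]; consequently ∂_u θ(u,v) ≥ 0 and ∂_v ζ(u,v) ≥ 0 everywhere, i.e. θ is non-decreasing in u and ζ is non-decreasing in v. -/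
/-!
Writing `a = -λ/r ≥ 0` and `b = -ν/r ≥ 0`, the system reads `∂_u θ = a ζ`, `∂_v ζ = b θ`, and by
compactness `a, b ≤ M`. For `ε > 0` both `θ` and `ζ` stay above `-ε e^{M(u+v)}`: at a first
point (in `u + v`) where one of them reaches this barrier, the other one lies above it on the
characteristic segment leading back to the initial data, and there `θ + ε e^{M(u+v)}`
(resp. `ζ + ε e^{M(u+v)}`) is non-decreasing because `a ζ + M ε e^{M(u+v)} ≥ (M - a) ε e^{M(u+v)}`.
Letting `ε → 0` gives `θ, ζ ≥ 0`, and then the derivatives `a ζ`, `b θ` are nonnegative.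
-/

open Set Real

lemma monotoneOn_Icc_of_hasDerivWithinAt_nonneg {f f' : ℝ → ℝ} {a b : ℝ}
    (hf : ∀ x ∈ Icc a b, HasDerivWithinAt f (f' x) (Icc a b) x)
    (hf' : ∀ x ∈ Ioo a b, 0 ≤ f' x) : MonotoneOn f (Icc a b) := by
  refine monotoneOn_of_hasDerivWithinAt_nonneg (convex_Icc a b)
    (fun x hx => (hf x hx).continuousWithinAt) (fun x hx => ?_) (by rwa [interior_Icc])
  rw [interior_Icc] at hx ⊢
  exact (hf x (Ioo_subset_Icc_self hx)).mono Ioo_subset_Icc_self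

lemma add_le_add_mul_exp_of_hasDerivWithinAt_mul {f g a : ℝ → ℝ} {M c x : ℝ} (hc : 0 ≤ c)
    (hx : 0 ≤ x) (hf : ∀ s ∈ Icc 0 x, HasDerivWithinAt f (g s * a s) (Icc 0 x) s)
    (ha₀ : ∀ s ∈ Ioo 0 x, 0 ≤ a s) (haM : ∀ s ∈ Ioo 0 x, a s ≤ M)
    (hg : ∀ s ∈ Ioo 0 x, 0 ≤ g s + c * exp (M * s)) :
    f 0 + c ≤ f x + c * exp (M * x) := by
  have hE (s : ℝ) : HasDerivAt (fun s => c * exp (M * s)) (c * exp (M * s) * M) s :=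
    (((hasDerivAt_id' s).const_mul M).exp.const_mul c).congr_deriv (by ring)
  have hmono := monotoneOn_Icc_of_hasDerivWithinAt_nonneg (f := fun s => f s + c * exp (M * s))
    (fun s hs => (hf s hs).add (hE s).hasDerivWithinAt) fun s hs => by
      have hE₀ : 0 ≤ c * exp (M * s) := by positivity
      nlinarith [ha₀ s hs, haM s hs, hg s hs]
  simpa using hmono (left_mem_Icc.2 hx) (right_mem_Icc.2 hx) hx

section CharacteristicSystem

variable {θ ζ a b : ℝ → ℝ → ℝ} {U V M : ℝ}
  (hθc : ContinuousOn (fun p : ℝ × ℝ => θ p.1 p.2) (Icc 0 U ×ˢ Icc 0 V))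
  (hζc : ContinuousOn (fun p : ℝ × ℝ => ζ p.1 p.2) (Icc 0 U ×ˢ Icc 0 V))
  (ha₀ : ∀ u ∈ Icc 0 U, ∀ v ∈ Icc 0 V, 0 ≤ a u v) (haM : ∀ u ∈ Icc 0 U, ∀ v ∈ Icc 0 V, a u v ≤ M)
  (hb₀ : ∀ u ∈ Icc 0 U, ∀ v ∈ Icc 0 V, 0 ≤ b u v) (hbM : ∀ u ∈ Icc 0 U, ∀ v ∈ Icc 0 V, b u v ≤ M)
  (hθu : ∀ u ∈ Icc 0 U, ∀ v ∈ Icc 0 V,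
    HasDerivWithinAt (fun u' => θ u' v) (ζ u v * a u v) (Icc 0 U) u)
  (hζv : ∀ u ∈ Icc 0 U, ∀ v ∈ Icc 0 V,
    HasDerivWithinAt (fun v' => ζ u v') (θ u v * b u v) (Icc 0 V) v)
  (hθ0 : ∀ v ∈ Icc 0 V, 0 ≤ θ 0 v) (hζ0 : ∀ u ∈ Icc 0 U, 0 ≤ ζ u 0)
include hθc hζc ha₀ haM hb₀ hbM hθu hζv hθ0 hζ0

lemma min_add_exp_pos_of_characteristic_system {ε : ℝ} (hε : 0 < ε) :
    ∀ u ∈ Icc 0 U, ∀ v ∈ Icc 0 V, 0 < min (θ u v + ε * exp (M * u) * exp (M * v))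
      (ζ u v + ε * exp (M * u) * exp (M * v)) := by
  set R := Icc (0 : ℝ) U ×ˢ Icc (0 : ℝ) V
  set m : ℝ × ℝ → ℝ := fun p => min (θ p.1 p.2 + ε * exp (M * p.1) * exp (M * p.2))
    (ζ p.1 p.2 + ε * exp (M * p.1) * exp (M * p.2))
  have hE : Continuous fun p : ℝ × ℝ => ε * exp (M * p.1) * exp (M * p.2) := by fun_prop
  have hm : ContinuousOn m R :=
    ContinuousOn.inf (hθc.add hE.continuousOn) (hζc.add hE.continuousOn)
  have hR : IsCompact R := isCompact_Icc.prod isCompact_Icc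
  have hB : IsCompact (R ∩ m ⁻¹' Iic 0) := hR.of_isClosed_subset
    (hm.preimage_isClosed_of_isClosed hR.isClosed isClosed_Iic) inter_subset_left
  by_contra! hbad
  obtain ⟨u, hu, v, hv, huv⟩ := hbad
  obtain ⟨⟨u₀, v₀⟩, ⟨⟨hu₀, hv₀⟩, hm₀⟩, hfirst⟩ :=
    hB.exists_isMinOn ⟨(u, v), ⟨hu, hv⟩, huv⟩ (continuousOn_fst.add continuousOn_snd)
  have hbelow : ∀ p ∈ R, p.1 + p.2 < u₀ + v₀ → 0 < m p := fun p hp hlt => by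
    by_contra! h
    exact (hfirst ⟨hp, h⟩).not_gt hlt
  have hθpos : 0 < θ u₀ v₀ + ε * exp (M * u₀) * exp (M * v₀) := by
    have h := add_le_add_mul_exp_of_hasDerivWithinAt_mul (f := fun s => θ s v₀)
      (c := ε * exp (M * v₀)) (by positivity) hu₀.1
      (fun s hs => (hθu s ⟨hs.1, hs.2.trans hu₀.2⟩ v₀ hv₀).mono (Icc_subset_Icc_right hu₀.2))
      (fun s hs => ha₀ s ⟨hs.1.le, hs.2.le.trans hu₀.2⟩ v₀ hv₀)
      (fun s hs => haM s ⟨hs.1.le, hs.2.le.trans hu₀.2⟩ v₀ hv₀) fun s hs => by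
        have := (lt_min_iff.1 (hbelow (s, v₀) ⟨⟨hs.1.le, hs.2.le.trans hu₀.2⟩, hv₀⟩
          (by simp [hs.2]))).2
        linarith [mul_right_comm ε (exp (M * s)) (exp (M * v₀))]
    have : 0 < ε * exp (M * v₀) := by positivity
    linarith [hθ0 v₀ hv₀, mul_right_comm ε (exp (M * u₀)) (exp (M * v₀))]
  have hζpos : 0 < ζ u₀ v₀ + ε * exp (M * u₀) * exp (M * v₀) := by
    have h := add_le_add_mul_exp_of_hasDerivWithinAt_mul (f := fun t => ζ u₀ t)
      (c := ε * exp (M * u₀)) (by positivity) hv₀.1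
      (fun t ht => (hζv u₀ hu₀ t ⟨ht.1, ht.2.trans hv₀.2⟩).mono (Icc_subset_Icc_right hv₀.2))
      (fun t ht => hb₀ u₀ hu₀ t ⟨ht.1.le, ht.2.le.trans hv₀.2⟩)
      (fun t ht => hbM u₀ hu₀ t ⟨ht.1.le, ht.2.le.trans hv₀.2⟩) fun t ht =>
        ((lt_min_iff.1 (hbelow (u₀, t) ⟨hu₀, ht.1.le, ht.2.le.trans hv₀.2⟩
          (by simp [ht.2]))).1).le
    have : 0 < ε * exp (M * u₀) := by positivity
    linarith [hζ0 u₀ hu₀]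
  exact not_lt.2 hm₀ (lt_min hθpos hζpos)

lemma nonneg_of_characteristic_system :
    ∀ u ∈ Icc 0 U, ∀ v ∈ Icc 0 V, 0 ≤ θ u v ∧ 0 ≤ ζ u v := by
  intro u hu v hv
  have hC : 0 < exp (M * u) * exp (M * v) := by positivity
  have hδ (δ : ℝ) (hδ : 0 < δ) : 0 < min (θ u v + δ) (ζ u v + δ) := by
    simpa [mul_assoc, div_mul_cancel₀ _ hC.ne'] using
      min_add_exp_pos_of_characteristic_system hθc hζc ha₀ haM hb₀ hbM hθu hζv hθ0 hζ0
        (div_pos hδ hC) u hu v hv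
  exact ⟨le_of_forall_pos_lt_add fun δ h => (lt_min_iff.1 (hδ δ h)).1,
    le_of_forall_pos_lt_add fun δ h => (lt_min_iff.1 (hδ δ h)).2⟩

end CharacteristicSystem

theorem stmt2_general (U V : ℝ)
    (θ ζ lam ν r : ℝ → ℝ → ℝ)
    (hθc : ContinuousOn (fun p : ℝ × ℝ => θ p.1 p.2) (Set.Icc 0 U ×ˢ Set.Icc 0 V))
    (hζc : ContinuousOn (fun p : ℝ × ℝ => ζ p.1 p.2) (Set.Icc 0 U ×ˢ Set.Icc 0 V))
    (hlamc : ContinuousOn (fun p : ℝ × ℝ => lam p.1 p.2) (Set.Icc 0 U ×ˢ Set.Icc 0 V))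
    (hνc : ContinuousOn (fun p : ℝ × ℝ => ν p.1 p.2) (Set.Icc 0 U ×ˢ Set.Icc 0 V))
    (hrc : ContinuousOn (fun p : ℝ × ℝ => r p.1 p.2) (Set.Icc 0 U ×ˢ Set.Icc 0 V))
    (hr : ∀ u ∈ Set.Icc (0:ℝ) U, ∀ v ∈ Set.Icc (0:ℝ) V, 0 < r u v)
    (hlam : ∀ u ∈ Set.Icc (0:ℝ) U, ∀ v ∈ Set.Icc (0:ℝ) V, lam u v ≤ 0)
    (hν : ∀ u ∈ Set.Icc (0:ℝ) U, ∀ v ∈ Set.Icc (0:ℝ) V, ν u v ≤ 0)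
    (hθu : ∀ u ∈ Set.Icc (0:ℝ) U, ∀ v ∈ Set.Icc (0:ℝ) V,
      HasDerivWithinAt (fun u' => θ u' v) (-(ζ u v * lam u v) / r u v)
        (Set.Icc 0 U) u)
    (hζv : ∀ u ∈ Set.Icc (0:ℝ) U, ∀ v ∈ Set.Icc (0:ℝ) V,
      HasDerivWithinAt (fun v' => ζ u v') (-(θ u v * ν u v) / r u v)
        (Set.Icc 0 V) v)
    (hθ0 : ∀ v ∈ Set.Icc (0:ℝ) V, 0 ≤ θ 0 v)
    (hζ0 : ∀ u ∈ Set.Icc (0:ℝ) U, 0 ≤ ζ u 0) :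
    (∀ u ∈ Set.Icc (0:ℝ) U, ∀ v ∈ Set.Icc (0:ℝ) V,
      0 ≤ θ u v ∧ 0 ≤ ζ u v ∧
      0 ≤ -(ζ u v * lam u v) / r u v ∧ 0 ≤ -(θ u v * ν u v) / r u v) ∧
    (∀ v ∈ Set.Icc (0:ℝ) V, MonotoneOn (fun u => θ u v) (Set.Icc 0 U)) ∧
    (∀ u ∈ Set.Icc (0:ℝ) U, MonotoneOn (fun v => ζ u v) (Set.Icc 0 V)) := by
  have hR : IsCompact (Icc (0:ℝ) U ×ˢ Icc (0:ℝ) V) := isCompact_Icc.prod isCompact_Icc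
  have hr₀ : ∀ p ∈ Icc (0:ℝ) U ×ˢ Icc (0:ℝ) V, r p.1 p.2 ≠ 0 := fun p hp => (hr _ hp.1 _ hp.2).ne'
  obtain ⟨Ma, hMa⟩ := hR.bddAbove_image (hlamc.neg.div hrc hr₀)
  obtain ⟨Mb, hMb⟩ := hR.bddAbove_image (hνc.neg.div hrc hr₀)
  have hθζ : ∀ u ∈ Icc (0:ℝ) U, ∀ v ∈ Icc (0:ℝ) V, 0 ≤ θ u v ∧ 0 ≤ ζ u v :=
    nonneg_of_characteristic_system (a := fun u v => -lam u v / r u v)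
      (b := fun u v => -ν u v / r u v) (M := max Ma Mb) hθc hζc
      (fun u hu v hv => div_nonneg (neg_nonneg.2 (hlam u hu v hv)) (hr u hu v hv).le)
      (fun u hu v hv => (hMa ⟨(u, v), ⟨hu, hv⟩, rfl⟩).trans (le_max_left _ _))
      (fun u hu v hv => div_nonneg (neg_nonneg.2 (hν u hu v hv)) (hr u hu v hv).le)
      (fun u hu v hv => (hMb ⟨(u, v), ⟨hu, hv⟩, rfl⟩).trans (le_max_right _ _))
      (fun u hu v hv => by convert hθu u hu v hv using 1; ring)
      (fun u hu v hv => by convert hζv u hu v hv using 1; ring) hθ0 hζ0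
  have hθ' : ∀ u ∈ Icc (0:ℝ) U, ∀ v ∈ Icc (0:ℝ) V, 0 ≤ -(ζ u v * lam u v) / r u v :=
    fun u hu v hv => div_nonneg (by nlinarith [(hθζ u hu v hv).2, hlam u hu v hv]) (hr u hu v hv).le
  have hζ' : ∀ u ∈ Icc (0:ℝ) U, ∀ v ∈ Icc (0:ℝ) V, 0 ≤ -(θ u v * ν u v) / r u v :=
    fun u hu v hv => div_nonneg (by nlinarith [(hθζ u hu v hv).1, hν u hu v hv]) (hr u hu v hv).le
  refine ⟨fun u hu v hv => ⟨(hθζ u hu v hv).1, (hθζ u hu v hv).2, hθ' u hu v hv, hζ' u hu v hv⟩,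
    fun v hv => ?_, fun u hu => ?_⟩
  · exact monotoneOn_Icc_of_hasDerivWithinAt_nonneg (fun u hu => hθu u hu v hv)
      fun u hu => hθ' u (Ioo_subset_Icc_self hu) v hv
  · exact monotoneOn_Icc_of_hasDerivWithinAt_nonneg (fun v hv => hζv u hu v hv)
      fun v hv => hζ' u hu v (Ioo_subset_Icc_self hv)

/-- The monotonicity peculiar to trapped regions: for the characteristic form of
the wave equation `∂_u θ = −ζλ/r`, `∂_v ζ = −θν/r` on the rectangle
`[0,U] × [0,V]`, with `r > 0`, `λ ≤ 0`, `ν ≤ 0`, nonnegativity of `θ` on the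
initial segment `u = 0` and of `ζ` on the initial segment `v = 0` is preserved:
`θ ≥ 0` and `ζ ≥ 0` everywhere; consequently `∂_u θ ≥ 0` and `∂_v ζ ≥ 0`
everywhere, i.e. `θ` is non-decreasing in `u` and `ζ` is non-decreasing
in `v`. -/
theorem stmt2 (U V : ℝ) (hU : 0 < U) (hV : 0 < V)
    (θ ζ lam ν r : ℝ → ℝ → ℝ)
    (hθc : ContinuousOn (fun p : ℝ × ℝ => θ p.1 p.2) (Set.Icc 0 U ×ˢ Set.Icc 0 V))
    (hζc : ContinuousOn (fun p : ℝ × ℝ => ζ p.1 p.2) (Set.Icc 0 U ×ˢ Set.Icc 0 V))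
    (hlamc : ContinuousOn (fun p : ℝ × ℝ => lam p.1 p.2) (Set.Icc 0 U ×ˢ Set.Icc 0 V))
    (hνc : ContinuousOn (fun p : ℝ × ℝ => ν p.1 p.2) (Set.Icc 0 U ×ˢ Set.Icc 0 V))
    (hrc : ContinuousOn (fun p : ℝ × ℝ => r p.1 p.2) (Set.Icc 0 U ×ˢ Set.Icc 0 V))
    (hr : ∀ u ∈ Set.Icc (0:ℝ) U, ∀ v ∈ Set.Icc (0:ℝ) V, 0 < r u v)
    (hlam : ∀ u ∈ Set.Icc (0:ℝ) U, ∀ v ∈ Set.Icc (0:ℝ) V, lam u v ≤ 0)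
    (hν : ∀ u ∈ Set.Icc (0:ℝ) U, ∀ v ∈ Set.Icc (0:ℝ) V, ν u v ≤ 0)
    (hθu : ∀ u ∈ Set.Icc (0:ℝ) U, ∀ v ∈ Set.Icc (0:ℝ) V,
      HasDerivWithinAt (fun u' => θ u' v) (-(ζ u v * lam u v) / r u v)
        (Set.Icc 0 U) u)
    (hζv : ∀ u ∈ Set.Icc (0:ℝ) U, ∀ v ∈ Set.Icc (0:ℝ) V,
      HasDerivWithinAt (fun v' => ζ u v') (-(θ u v * ν u v) / r u v)
        (Set.Icc 0 V) v)
    (hθ0 : ∀ v ∈ Set.Icc (0:ℝ) V, 0 ≤ θ 0 v)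
    (hζ0 : ∀ u ∈ Set.Icc (0:ℝ) U, 0 ≤ ζ u 0) :
    (∀ u ∈ Set.Icc (0:ℝ) U, ∀ v ∈ Set.Icc (0:ℝ) V,
      0 ≤ θ u v ∧ 0 ≤ ζ u v ∧
      0 ≤ -(ζ u v * lam u v) / r u v ∧ 0 ≤ -(θ u v * ν u v) / r u v) ∧
    (∀ v ∈ Set.Icc (0:ℝ) V, MonotoneOn (fun u => θ u v) (Set.Icc 0 U)) ∧
    (∀ u ∈ Set.Icc (0:ℝ) U, MonotoneOn (fun v => ζ u v) (Set.Icc 0 V)) :=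
  stmt2_general U V θ ζ lam ν r hθc hζc hlamc hνc hrc hr hlam hν hθu hζv hθ0 hζ0
end

section
/- Let U > 0, V ∈ ℝ, ε > 0, m₀ ∈ ℝ, and let w : (0,U] × [0,V) → ℝ satisfy: (i) for each fixed u, the function v ↦ w(u,v) is non-decreasing on [0,V); (ii) for all 0 < u ≤ u' ≤ U and 0 ≤ v ≤ v' < V, w(u',v') − w(u',v) ≥ w(u,v') − w(u,v). Suppose there is a function γ : (0,U] → [0,V) with γ(u) → V as u → 0⁺ and w(u, γ(u)) → m₀ as u → 0⁺, and suppose that for every u ∈ (0,U], sup_{v ∈ [0,V)} w(u,v) ≥ m₀ + 2ε. Then for every u₀ ∈ (0,U], w(u₀, v) → ∞ as v → V⁻; that is, w blows up identically on the boundary v = V. -/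
/-!
For small `u`, the mass `w u` gains at least `ε` between `γ u` and some later `v`, since it is
close to `m₀` at `γ u` but its supremum exceeds `m₀ + 2ε`. Superadditivity transfers this gain
to `w u₀` on `[γ u, v]`, and `γ u → V`, so every value of `w u₀` on `[0, V)` is exceeded by `ε`
further on. Hence the monotone function `w u₀` is unbounded, i.e. it tends to `∞` at `V`.
-/

open Filter Set Topology

lemma exists_mem_lt_of_coe_lt_biSup {α : Type*} {s : Set α} {f : α → ℝ} {x : ℝ}
    (h : (x : EReal) < ⨆ a ∈ s, (f a : EReal)) : ∃ a ∈ s, x < f a := by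
  simpa [lt_iSup_iff] using h

lemma not_bddAbove_image_of_forall_exists_add_le {α : Type*} {s : Set α} {f : α → ℝ} {δ : ℝ}
    (hδ : 0 < δ) (hs : s.Nonempty) (h : ∀ a ∈ s, ∃ b ∈ s, f a + δ ≤ f b) :
    ¬BddAbove (f '' s) := by
  intro hbdd
  obtain ⟨_, ⟨a, ha, rfl⟩, hlt⟩ :=
    exists_lt_of_lt_csSup (hs.image f) (sub_lt_self (sSup (f '' s)) hδ)
  obtain ⟨b, hb, hab⟩ := h a ha
  have := le_csSup hbdd (mem_image_of_mem f hb)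
  linarith

lemma MonotoneOn.tendsto_nhdsLT_atTop_of_not_bddAbove {α β : Type*} [LinearOrder α]
    [TopologicalSpace α] [OrderTopology α] [LinearOrder β] {f : α → β} {a b : α}
    (hf : MonotoneOn f (Ico a b)) (hunb : ¬BddAbove (f '' Ico a b)) :
    Tendsto f (𝓝[<] b) atTop := by
  refine tendsto_atTop.2 fun c => ?_
  obtain ⟨_, ⟨v, hv, rfl⟩, hcv⟩ := not_bddAbove_iff.1 hunb c
  filter_upwards [Ioo_mem_nhdsLT_of_mem ⟨hv.2, le_rfl⟩] with x hx
  exact hcv.le.trans (hf hv ⟨hv.1.trans hx.1.le, hx.2⟩ hx.1.le)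

lemma exists_add_le_of_superadditive {U V ε m₀ : ℝ} (hε : 0 < ε) {w : ℝ → ℝ → ℝ}
    (hmono : ∀ u ∈ Ioc (0:ℝ) U, MonotoneOn (w u) (Ico 0 V))
    (hsuper : ∀ u u' v v' : ℝ, 0 < u → u ≤ u' → u' ≤ U →
      0 ≤ v → v ≤ v' → v' < V → w u v' - w u v ≤ w u' v' - w u' v)
    {γ : ℝ → ℝ} (hγmem : ∀ u ∈ Ioc (0:ℝ) U, γ u ∈ Ico (0:ℝ) V)
    (hγlim : Tendsto γ (𝓝[>] 0) (𝓝 V)) (hwγlim : Tendsto (fun u => w u (γ u)) (𝓝[>] 0) (𝓝 m₀))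
    (hsup : ∀ u ∈ Ioc (0:ℝ) U,
      ((m₀ + 2 * ε : ℝ) : EReal) ≤ ⨆ v ∈ Ico (0:ℝ) V, ((w u v : ℝ) : EReal))
    {u₀ : ℝ} (hu₀ : u₀ ∈ Ioc 0 U) {v₀ : ℝ} (hv₀ : v₀ ∈ Ico 0 V) :
    ∃ v ∈ Ico 0 V, w u₀ v₀ + ε ≤ w u₀ v := by
  have hsmall : ∀ᶠ u in 𝓝[>] 0, (0 < u ∧ u < u₀) ∧ v₀ < γ u ∧ w u (γ u) < m₀ + ε / 2 :=
    ((Filter.Eventually.and self_mem_nhdsWithin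
        (mem_nhdsWithin_of_mem_nhds (Iio_mem_nhds hu₀.1))).and
      ((hγlim.eventually (lt_mem_nhds hv₀.2)).and
        (hwγlim.eventually (Iio_mem_nhds (by linarith : m₀ < m₀ + ε / 2)))))
  obtain ⟨u, ⟨hu_pos, hu_lt⟩, hv₀γ, hwγ⟩ := hsmall.exists
  have hu : u ∈ Ioc 0 U := ⟨hu_pos, hu_lt.le.trans hu₀.2⟩
  obtain ⟨v, hv, hwv⟩ := exists_mem_lt_of_coe_lt_biSup
    ((EReal.coe_lt_coe_iff.2 (by linarith : m₀ + 3 * ε / 2 < m₀ + 2 * ε)).trans_le (hsup u hu))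
  have hγu := hγmem u hu
  have hγv : γ u < v := (hmono u hu).reflect_lt hγu hv (by linarith)
  have htransfer := hsuper u u₀ (γ u) v hu_pos hu_lt.le hu₀.2 hγu.1 hγv.le hv.2
  have hw₀ := hmono u₀ hu₀ hv₀ hγu hv₀γ.le
  exact ⟨v, hv, by linarith⟩

theorem stmt6_general (U V ε m₀ : ℝ) (hε : 0 < ε)
    (w : ℝ → ℝ → ℝ)
    (hmono : ∀ u ∈ Set.Ioc (0:ℝ) U, MonotoneOn (w u) (Set.Ico 0 V))
    (hsuper : ∀ u u' v v' : ℝ, 0 < u → u ≤ u' → u' ≤ U →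
      0 ≤ v → v ≤ v' → v' < V → w u v' - w u v ≤ w u' v' - w u' v)
    (γ : ℝ → ℝ)
    (hγmem : ∀ u ∈ Set.Ioc (0:ℝ) U, γ u ∈ Set.Ico (0:ℝ) V)
    (hγlim : Filter.Tendsto γ (nhdsWithin 0 (Set.Ioi 0)) (nhds V))
    (hwγlim : Filter.Tendsto (fun u => w u (γ u)) (nhdsWithin 0 (Set.Ioi 0))
      (nhds m₀))
    (hsup : ∀ u ∈ Set.Ioc (0:ℝ) U,
      ((m₀ + 2 * ε : ℝ) : EReal) ≤ ⨆ v ∈ Set.Ico (0:ℝ) V, ((w u v : ℝ) : EReal)) :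
    ∀ u₀ ∈ Set.Ioc (0:ℝ) U,
      Filter.Tendsto (fun v => w u₀ v) (nhdsWithin V (Set.Iio V))
        Filter.atTop := by
  intro u₀ hu₀
  refine (hmono u₀ hu₀).tendsto_nhdsLT_atTop_of_not_bddAbove ?_
  exact not_bddAbove_image_of_forall_exists_add_le hε ⟨γ u₀, hγmem u₀ hu₀⟩ fun v₀ hv₀ =>
    exists_add_le_of_superadditive hε hmono hsuper hγmem hγlim hwγlim hsup hu₀ hv₀

/-- The concluding argument in the proof of mass inflation.
Let `w : (0,U] × [0,V) → ℝ` be non-decreasing in `v` for each fixed `u` and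
satisfy the superadditivity inequality (monot).  Suppose `γ : (0,U] → [0,V)`
(the future boundary of the stable blue-shift region) satisfies `γ(u) → V`
and `w(u,γ(u)) → m₀` as `u → 0⁺`, and that for every `u ∈ (0,U]` one has
`sup_{v ∈ [0,V)} w(u,v) ≥ m₀ + 2ε` (assumption (assume), a quantitative
difference from Reissner–Nordström).  Then for every `u₀ ∈ (0,U]`,
`w(u₀,v) → ∞` as `v → V⁻`: the mass blows up identically on the boundary
`v = V`. -/
theorem stmt6 (U V ε m₀ : ℝ) (hU : 0 < U) (hV : 0 < V) (hε : 0 < ε)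
    (w : ℝ → ℝ → ℝ)
    (hmono : ∀ u ∈ Set.Ioc (0:ℝ) U, MonotoneOn (w u) (Set.Ico 0 V))
    (hsuper : ∀ u u' v v' : ℝ, 0 < u → u ≤ u' → u' ≤ U →
      0 ≤ v → v ≤ v' → v' < V → w u v' - w u v ≤ w u' v' - w u' v)
    (γ : ℝ → ℝ)
    (hγmem : ∀ u ∈ Set.Ioc (0:ℝ) U, γ u ∈ Set.Ico (0:ℝ) V)
    (hγlim : Filter.Tendsto γ (nhdsWithin 0 (Set.Ioi 0)) (nhds V))
    (hwγlim : Filter.Tendsto (fun u => w u (γ u)) (nhdsWithin 0 (Set.Ioi 0))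
      (nhds m₀))
    (hsup : ∀ u ∈ Set.Ioc (0:ℝ) U,
      ((m₀ + 2 * ε : ℝ) : EReal) ≤ ⨆ v ∈ Set.Ico (0:ℝ) V, ((w u v : ℝ) : EReal)) :
    ∀ u₀ ∈ Set.Ioc (0:ℝ) U,
      Filter.Tendsto (fun v => w u₀ v) (nhdsWithin V (Set.Iio V))
        Filter.atTop :=
  stmt6_general U V ε m₀ hε w hmono hsuper γ hγmem hγlim hwγlim hsup
end
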